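/- arXiv:2407.05792 — 5 statements merged into one kernel-verified Lean document; each statement's English description precedes it below -/
import Mathlib

section
/- Let D be the set of non-increasing right-continuous functions U : ℝ → [0,1] with lim_{x→−∞} U(x) = 1 and lim_{x→+∞} U(x) = 0. For U, V ∈ D say U is more stretched than V, written U ≥_s V, if for every c ∈ ℝ and every x₁ ≤ x₂: U(x₁) > V(x₁ + c) implies U(x₂) ≥ V(x₂ + c). Suppose (U_n) and (V_n) are sequences in D, and U, V ∈ D, such that U_n(x) → U(x) at every continuity point x of U, and V_n(x) → V(x) at every continuity point x of V, and suppose U_n ≥_s V_n for all n. Then U ≥_s V. -/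
open Filter Topology

/-- Membership in `D`: `U : ℝ → ℝ` is a non-increasing right-continuous (càdlàg)
function with values in `[0,1]`, tending to `1` at `−∞` and to `0` at `+∞`
(a complementary CDF of a probability measure on `ℝ`). -/
def IsCCDF (U : ℝ → ℝ) : Prop :=
  (∀ x, U x ∈ Set.Icc (0 : ℝ) 1) ∧ Antitone U ∧
  (∀ x, ContinuousWithinAt U (Set.Ici x) x) ∧
  Tendsto U atBot (𝓝 1) ∧ Tendsto U atTop (𝓝 0)

/-- `U` is more stretched than `V` (written `U ≥ₛ V`): for all `c ∈ ℝ` and `x₁ ≤ x₂`,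
`U(x₁) > V(x₁ + c)` implies `U(x₂) ≥ V(x₂ + c)`. -/
def MoreStretched (U V : ℝ → ℝ) : Prop :=
  ∀ c : ℝ, ∀ x₁ x₂ : ℝ, x₁ ≤ x₂ → V (x₁ + c) < U x₁ → V (x₂ + c) ≤ U x₂

/-!
At points where `U`, `V` (suitably shifted) are continuous, the strict hypothesis
`V (y₁ + c) < U y₁` transfers to `Uₙ, Vₙ` for large `n`, and the weak conclusion
`Vₙ (y₂ + c) ≤ Uₙ y₂` passes back to the limit. A violation of `U ≥ₛ V` at arbitrary
`x₁ ≤ x₂` survives, by right-continuity, on small intervals to the right of `x₁` and `x₂`;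
since monotone functions have only countably many discontinuities, these intervals contain
continuity points, where the violation is impossible.
-/

open Set

lemma eventually_nhdsGT_lt_of_continuousWithinAt_Ici {α β : Type*} [TopologicalSpace α]
    [Preorder α] [TopologicalSpace β] [LinearOrder β] [OrderClosedTopology β] {f g : α → β}
    {x : α} (hf : ContinuousWithinAt f (Ici x) x) (hg : ContinuousWithinAt g (Ici x) x)
    (hfg : f x < g x) : ∀ᶠ y in 𝓝[>] x, f y < g y :=
  (hf.eventually_lt hg hfg).filter_mono (nhdsWithin_mono x Ioi_subset_Ici_self)

lemma continuousWithinAt_Ici_comp_add_const {f : ℝ → ℝ} {x : ℝ} (c : ℝ)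
    (hf : ContinuousWithinAt f (Ici (x + c)) (x + c)) :
    ContinuousWithinAt (fun y => f (y + c)) (Ici x) x :=
  hf.comp (f := (· + c)) (continuous_add_const c).continuousWithinAt
    fun _ hy => add_le_add_left hy c

lemma exists_mem_Ioo_continuousAt_of_antitone {U V : ℝ → ℝ} (hU : Antitone U)
    (hV : Antitone V) (c : ℝ) {a b : ℝ} (hab : a < b) :
    ∃ y ∈ Ioo a b, ContinuousAt U y ∧ ContinuousAt V (y + c) := by
  set S : Set ℝ := {y | ¬ContinuousAt U y} ∪ (· - c) '' {z | ¬ContinuousAt V z}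
  have hS : S.Countable :=
    hU.countable_not_continuousAt.union (hV.countable_not_continuousAt.image _)
  obtain ⟨y, hyS, hay, hyb⟩ := (hS.dense_compl ℝ).exists_between hab
  refine ⟨y, ⟨hay, hyb⟩, not_not.1 fun h => hyS (Or.inl h), not_not.1 fun h => ?_⟩
  exact hyS (Or.inr ⟨y + c, h, add_sub_cancel_right y c⟩)

lemma Filter.Eventually.exists_mem_Ioo_continuousAt_of_antitone {U V : ℝ → ℝ}
    (hU : Antitone U) (hV : Antitone V) (c : ℝ) {p : ℝ → Prop} {x b : ℝ}
    (hp : ∀ᶠ y in 𝓝[>] x, p y) (hxb : x < b) :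
    ∃ y ∈ Ioo x b, p y ∧ ContinuousAt U y ∧ ContinuousAt V (y + c) := by
  obtain ⟨u, hxu, hup⟩ := mem_nhdsGT_iff_exists_Ioo_subset.1 hp
  obtain ⟨y, ⟨hxy, hy⟩, hUy, hVy⟩ :=
    _root_.exists_mem_Ioo_continuousAt_of_antitone hU hV c (lt_min hxu hxb)
  exact ⟨y, ⟨hxy, hy.trans_le (min_le_right u b)⟩,
    hup ⟨hxy, hy.trans_le (min_le_left u b)⟩, hUy, hVy⟩

lemma moreStretched_of_forall_continuousAt {U V : ℝ → ℝ} (hU : Antitone U) (hV : Antitone V)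
    (hUr : ∀ x, ContinuousWithinAt U (Ici x) x) (hVr : ∀ x, ContinuousWithinAt V (Ici x) x)
    (h : ∀ c y₁ y₂, y₁ ≤ y₂ → ContinuousAt U y₁ → ContinuousAt U y₂ →
      ContinuousAt V (y₁ + c) → ContinuousAt V (y₂ + c) →
      V (y₁ + c) < U y₁ → V (y₂ + c) ≤ U y₂) :
    MoreStretched U V := by
  intro c x₁ x₂ hx h₁
  by_contra! h₂
  have hshift : ∀ x, ContinuousWithinAt (fun y => V (y + c)) (Ici x) x := fun x =>
    continuousWithinAt_Ici_comp_add_const c (hVr (x + c))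
  obtain ⟨y₂, ⟨hxy₂, -⟩, hy₂, hU₂, hV₂⟩ :=
    (eventually_nhdsGT_lt_of_continuousWithinAt_Ici (hUr x₂) (hshift x₂) h₂
      ).exists_mem_Ioo_continuousAt_of_antitone hU hV c (lt_add_one x₂)
  obtain ⟨y₁, ⟨-, hy₁₂⟩, hy₁, hU₁, hV₁⟩ :=
    (eventually_nhdsGT_lt_of_continuousWithinAt_Ici (hshift x₁) (hUr x₁) h₁
      ).exists_mem_Ioo_continuousAt_of_antitone hU hV c (hx.trans_lt hxy₂)
  exact (h c y₁ y₂ hy₁₂.le hU₁ hU₂ hV₁ hV₂ hy₁).not_gt hy₂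

lemma le_of_moreStretched_of_tendsto {ι : Type*} {l : Filter ι} [l.NeBot]
    {Un Vn : ι → ℝ → ℝ} {U V : ℝ → ℝ} (hstretch : ∀ n, MoreStretched (Un n) (Vn n))
    {c y₁ y₂ : ℝ} (hy : y₁ ≤ y₂)
    (hU₁ : Tendsto (fun n => Un n y₁) l (𝓝 (U y₁)))
    (hU₂ : Tendsto (fun n => Un n y₂) l (𝓝 (U y₂)))
    (hV₁ : Tendsto (fun n => Vn n (y₁ + c)) l (𝓝 (V (y₁ + c))))
    (hV₂ : Tendsto (fun n => Vn n (y₂ + c)) l (𝓝 (V (y₂ + c))))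
    (h : V (y₁ + c) < U y₁) : V (y₂ + c) ≤ U y₂ :=
  le_of_tendsto_of_tendsto hV₂ hU₂
    ((hV₁.eventually_lt hU₁ h).mono fun n hn => hstretch n c y₁ y₂ hy hn)

theorem moreStretched_of_tendsto_general
    (Un Vn : ℕ → ℝ → ℝ) (U V : ℝ → ℝ)
    (hU : IsCCDF U) (hV : IsCCDF V)
    (hUconv : ∀ x, ContinuousAt U x → Tendsto (fun n => Un n x) atTop (𝓝 (U x)))
    (hVconv : ∀ x, ContinuousAt V x → Tendsto (fun n => Vn n x) atTop (𝓝 (V x)))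
    (hstretch : ∀ n, MoreStretched (Un n) (Vn n)) :
    MoreStretched U V :=
  moreStretched_of_forall_continuousAt hU.2.1 hV.2.1 hU.2.2.1 hV.2.2.1
    fun _ _ _ hy hU₁ hU₂ hV₁ hV₂ =>
      le_of_moreStretched_of_tendsto hstretch hy (hUconv _ hU₁) (hUconv _ hU₂)
        (hVconv _ hV₁) (hVconv _ hV₂)

/-- The stretching relation is preserved under limits in the topology `τ_D`
(pointwise convergence at all continuity points of the limit): if `Uₙ → U` and
`Vₙ → V` at every continuity point of `U` resp. `V`, with all functions in `D`,
and `Uₙ ≥ₛ Vₙ` for every `n`, then `U ≥ₛ V`. -/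
theorem moreStretched_of_tendsto
    (Un Vn : ℕ → ℝ → ℝ) (U V : ℝ → ℝ)
    (hUn : ∀ n, IsCCDF (Un n)) (hVn : ∀ n, IsCCDF (Vn n))
    (hU : IsCCDF U) (hV : IsCCDF V)
    (hUconv : ∀ x, ContinuousAt U x → Tendsto (fun n => Un n x) atTop (𝓝 (U x)))
    (hVconv : ∀ x, ContinuousAt V x → Tendsto (fun n => Vn n x) atTop (𝓝 (V x)))
    (hstretch : ∀ n, MoreStretched (Un n) (Vn n)) :
    MoreStretched U V :=
  moreStretched_of_tendsto_general Un Vn U V hU hV hUconv hVconv hstretch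
end

section
/- Let D be the set of non-increasing right-continuous functions U : ℝ → [0,1] with lim_{x→−∞} U(x) = 1 and lim_{x→+∞} U(x) = 0. For y ∈ (0,1] and U ∈ D set a^y(U) := inf{x ∈ ℝ : U(x) < y} ∈ ℝ ∪ {−∞} (for y ∈ (0,1) this is always a real number). Suppose U, V ∈ D are continuous on {x : x ≥ a¹(U)} and on {x : x ≥ a¹(V)} respectively (so the only possible discontinuity of each is a downward jump at a¹). Then the following are equivalent: (i) U ≥_s V (for every c ∈ ℝ and x₁ ≤ x₂, U(x₁) > V(x₁+c) implies U(x₂) ≥ V(x₂+c)); (ii) for every y ∈ (0,1): U(x + a^y(U)) ≥ V(x + a^y(V)) for all x > 0, and U(x + a^y(U)) ≤ V(x + a^y(V)) for all x < 0. Moreover, if in addition U ≥_s V and a¹(U) > −∞ and a¹(V) > −∞, then the inequalities in (ii) also hold for y = 1: U(x + a¹(U)) ≥ V(x + a¹(V)) for x > 0 and U(x + a¹(U)) ≤ V(x + a¹(V)) for x < 0. -/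
/-!
If `U ≥ₛ V`, a point `x₁` just left of `a^y(U)` has `U(x₁) ≥ y`, and a
shift `c` carrying it just right of `a^y(V)` gives `V(x₁ + c) < y`, so `≥ₛ` compares `U` and `V`
at every later point with the same shift. Letting `x₁` tend to the quantiles, this yields the
inequalities at points tending to `x + a^y(U)`; for `x > 0` that point lies beyond `a¹(U)`, where
`U` is continuous, and for `x < 0` right continuity suffices.

Conversely, if `V(x₁ + c) < U(x₁)`, pick `y` strictly in between: then `a^y(V) ≤ x₁ + c` and
`x₁ ≤ a^y(U)`, and the quantile inequality at the shift `x₂ + c - a^y(V)`, combined with the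
monotonicity of `U`, gives `V(x₂ + c) ≤ U(x₂)`.
-/
open Filter Topology

/-- The quantile `a^y(U) := inf {x : U(x) < y}`, which for `U ∈ D` and `y ∈ (0,1)`
is a genuine real number. -/
noncomputable def quantileFun (U : ℝ → ℝ) (y : ℝ) : ℝ :=
  sInf {x : ℝ | U x < y}

/-- `a¹(U) := inf {x : U(x) < 1} ∈ ℝ ∪ {−∞}`, as an extended real. -/
noncomputable def aOne (U : ℝ → ℝ) : EReal :=
  sInf ((fun x : ℝ => (x : EReal)) '' {x : ℝ | U x < 1})

open Set

section Quantile

variable {U : ℝ → ℝ} {y z : ℝ}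

lemma quantileFun_le (hbdd : BddBelow {x | U x < y}) (hz : U z < y) : quantileFun U y ≤ z :=
  csInf_le hbdd hz

lemma le_of_lt_quantileFun (hbdd : BddBelow {x | U x < y}) (hz : z < quantileFun U y) :
    y ≤ U z :=
  not_lt.1 fun h => (quantileFun_le hbdd h).not_gt hz

lemma lt_of_quantileFun_lt (hU : Antitone U) (hne : {x | U x < y}.Nonempty)
    (hz : quantileFun U y < z) : U z < y := by
  obtain ⟨w, hw, hwz⟩ := exists_lt_of_csInf_lt hne hz
  exact (hU hwz.le).trans_lt hw

lemma bddBelow_of_sInf_coe_ne_bot {s : Set ℝ} (h : sInf ((↑) '' s : Set EReal) ≠ ⊥) :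
    BddBelow s := by
  obtain ⟨r, -, hr⟩ := EReal.lt_iff_exists_real_btwn.1 (bot_lt_iff_ne_bot.2 h)
  exact ⟨r, fun w hw => EReal.coe_le_coe_iff.1 (hr.le.trans (sInf_le ⟨w, hw, rfl⟩))⟩

lemma continuousAt_of_lt_one (hUcont : ContinuousOn U {x : ℝ | aOne U ≤ (x : EReal)})
    {r : ℝ} (hz : U z < 1) (hzr : z < r) : ContinuousAt U r := by
  have hle : aOne U ≤ z := sInf_le ⟨z, hz, rfl⟩
  exact hUcont.continuousAt <| mem_of_superset (Ici_mem_nhds hzr) fun _ hw =>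
    hle.trans (EReal.coe_le_coe_iff.2 hw)

end Quantile

namespace IsCCDF

variable {U : ℝ → ℝ} {y : ℝ}

lemma nonempty_setOf_lt (hU : IsCCDF U) (hy : 0 < y) : {x | U x < y}.Nonempty :=
  (hU.2.2.2.2.eventually (eventually_lt_nhds hy)).exists

lemma bddBelow_setOf_lt (hU : IsCCDF U) (hy : y < 1) : BddBelow {x | U x < y} := by
  obtain ⟨x₀, hx₀⟩ := eventually_atBot.1 (hU.2.2.2.1.eventually (eventually_gt_nhds hy))
  exact ⟨x₀, fun z hz => le_of_not_ge fun h => (hx₀ z h).not_gt hz⟩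

lemma continuousAt_add_quantileFun (hU : IsCCDF U)
    (hUcont : ContinuousOn U {x : ℝ | aOne U ≤ (x : EReal)}) (hy0 : 0 < y) (hy1 : y ≤ 1)
    {x : ℝ} (hx : 0 < x) : ContinuousAt U (x + quantileFun U y) :=
  continuousAt_of_lt_one hUcont
    ((lt_of_quantileFun_lt hU.2.1 (hU.nonempty_setOf_lt hy0) (lt_add_of_pos_right _
      (half_pos hx))).trans_le hy1) (by linarith : quantileFun U y + x / 2 < x + quantileFun U y)

end IsCCDF

namespace MoreStretched

variable {U V : ℝ → ℝ} {y A B x : ℝ}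

lemma le_of_pos (hs : MoreStretched U V) (hA : ∀ z < A, y ≤ U z) (hB : ∀ z > B, V z < y)
    (hx : 0 < x) (hcont : ContinuousWithinAt U (Iio (x + A)) (x + A)) :
    V (x + B) ≤ U (x + A) := by
  have hclose : ∀ w ∈ Ioo A (x + A), V (x + B) ≤ U w := by
    rintro w ⟨hAw, hwx⟩
    have h := hs (x + B - w) ((w - x + A) / 2) w (by linarith)
      ((hB _ (by linarith)).trans_le (hA _ (by linarith)))
    rwa [add_sub_cancel] at h
  exact ge_of_tendsto hcont.tendsto
    (eventually_of_mem (Ioo_mem_nhdsLT (by linarith)) hclose)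

lemma le_of_neg (hs : MoreStretched U V) (hA : ∀ z > A, U z < y) (hB : ∀ z < B, y ≤ V z)
    (hx : x < 0) (hcont : ContinuousWithinAt U (Ici (x + A)) (x + A)) :
    U (x + A) ≤ V (x + B) := by
  have hclose : ∀ w ∈ Ioo (x + A) A, U w ≤ V (x + B) := by
    rintro w ⟨hxw, hwA⟩
    by_contra! hlt
    have h := hs (x + B - w) w ((A + w - x) / 2) (by linarith) (by rwa [add_sub_cancel])
    linarith [hA ((A + w - x) / 2) (by linarith), hB ((A + w - x) / 2 + (x + B - w)) (by linarith)]
  exact le_of_tendsto (hcont.mono Ioi_subset_Ici_self).tendsto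
    (eventually_of_mem (Ioo_mem_nhdsGT (by linarith)) hclose)

lemma le_add_quantileFun (hs : MoreStretched U V) (hU : IsCCDF U) (hV : IsCCDF V)
    (hUcont : ContinuousOn U {x : ℝ | aOne U ≤ (x : EReal)}) (hy0 : 0 < y) (hy1 : y ≤ 1)
    (hbdd : BddBelow {x | U x < y}) (hx : 0 < x) :
    V (x + quantileFun V y) ≤ U (x + quantileFun U y) :=
  hs.le_of_pos (fun _ hz => le_of_lt_quantileFun hbdd hz)
    (fun _ hz => lt_of_quantileFun_lt hV.2.1 (hV.nonempty_setOf_lt hy0) hz) hx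
    (hU.continuousAt_add_quantileFun hUcont hy0 hy1 hx).continuousWithinAt

lemma add_quantileFun_le (hs : MoreStretched U V) (hU : IsCCDF U) (hV : IsCCDF V)
    (hy : y ∈ Ioo 0 1) (hx : x < 0) : U (x + quantileFun U y) ≤ V (x + quantileFun V y) :=
  hs.le_of_neg (fun _ hz => lt_of_quantileFun_lt hU.2.1 (hU.nonempty_setOf_lt hy.1) hz)
    (fun _ hz => le_of_lt_quantileFun (hV.bddBelow_setOf_lt hy.2) hz) hx (hU.2.2.1 _)

end MoreStretched

lemma moreStretched_of_quantile {U V : ℝ → ℝ} (hU : IsCCDF U) (hV : IsCCDF V)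
    (H : ∀ y ∈ Ioo (0 : ℝ) 1, ∀ x > (0 : ℝ), V (x + quantileFun V y) ≤ U (x + quantileFun U y)) :
    MoreStretched U V := by
  intro c x₁ x₂ h12 h1
  obtain ⟨y, hVy, hyU⟩ := exists_between h1
  have hy : y ∈ Ioo 0 1 := ⟨(hV.1 _).1.trans_lt hVy, hyU.trans_le (hU.1 _).2⟩
  have hVq : quantileFun V y ≤ x₁ + c := quantileFun_le (hV.bddBelow_setOf_lt hy.2) hVy
  have hUq : x₁ ≤ quantileFun U y := le_of_not_gt fun h =>
    (lt_of_quantileFun_lt hU.2.1 (hU.nonempty_setOf_lt hy.1) h).not_gt hyU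
  rcases le_or_gt (x₂ + c) (quantileFun V y) with hle | hlt
  · obtain rfl : x₁ = x₂ := le_antisymm h12 (by linarith)
    exact h1.le
  · have h := H y hy (x₂ + c - quantileFun V y) (by linarith)
    rw [sub_add_cancel] at h
    exact h.trans (hU.2.1 (by linarith))

theorem moreStretched_iff_quantile_general
    (U V : ℝ → ℝ) (hU : IsCCDF U) (hV : IsCCDF V)
    (hUcont : ContinuousOn U {x : ℝ | aOne U ≤ (x : EReal)}) :
    (MoreStretched U V ↔ ∀ y ∈ Set.Ioo (0 : ℝ) 1,
        (∀ x > (0 : ℝ), V (x + quantileFun V y) ≤ U (x + quantileFun U y)) ∧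
        (∀ x < (0 : ℝ), U (x + quantileFun U y) ≤ V (x + quantileFun V y))) ∧
    (MoreStretched U V → aOne U ≠ ⊥ → aOne V ≠ ⊥ →
        (∀ x > (0 : ℝ),
          V (x + sInf {z : ℝ | V z < 1}) ≤ U (x + sInf {z : ℝ | U z < 1})) ∧
        (∀ x < (0 : ℝ),
          U (x + sInf {z : ℝ | U z < 1}) ≤ V (x + sInf {z : ℝ | V z < 1}))) := by
  refine ⟨⟨fun hs y hy => ⟨fun x hx => ?_, fun x hx => hs.add_quantileFun_le hU hV hy hx⟩,
    fun H => moreStretched_of_quantile hU hV fun y hy => (H y hy).1⟩, fun hs hUb hVb => ⟨?_, ?_⟩⟩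
  · exact hs.le_add_quantileFun hU hV hUcont hy.1 hy.2.le (hU.bddBelow_setOf_lt hy.2) hx
  · exact fun x hx => hs.le_add_quantileFun hU hV hUcont one_pos le_rfl
      (bddBelow_of_sInf_coe_ne_bot hUb) hx
  · -- `V = 1` to the left of `a¹(V)`
    exact fun x hx => (hU.1 _).2.trans
      (le_of_lt_quantileFun (bddBelow_of_sInf_coe_ne_bot hVb) (add_lt_of_neg_left _ hx))

/-- Suppose `U, V ∈ D` are continuous on `{x : x ≥ a¹(U)}` and `{x : x ≥ a¹(V)}`
respectively.  Then `U ≥ₛ V` if and only if for every `y ∈ (0,1)` one has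
`U(x + a^y(U)) ≥ V(x + a^y(V))` for all `x > 0` and `U(x + a^y(U)) ≤ V(x + a^y(V))`
for all `x < 0`.  Moreover, if in addition `U ≥ₛ V` and `a¹(U), a¹(V) > −∞`, then the
same two inequalities also hold with `y = 1`, i.e. with `a¹(U)` and `a¹(V)` (which are
then the genuine real infima of the corresponding sets). -/
theorem moreStretched_iff_quantile
    (U V : ℝ → ℝ) (hU : IsCCDF U) (hV : IsCCDF V)
    (hUcont : ContinuousOn U {x : ℝ | aOne U ≤ (x : EReal)})
    (hVcont : ContinuousOn V {x : ℝ | aOne V ≤ (x : EReal)}) :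
    (MoreStretched U V ↔ ∀ y ∈ Set.Ioo (0 : ℝ) 1,
        (∀ x > (0 : ℝ), V (x + quantileFun V y) ≤ U (x + quantileFun U y)) ∧
        (∀ x < (0 : ℝ), U (x + quantileFun U y) ≤ V (x + quantileFun V y))) ∧
    (MoreStretched U V → aOne U ≠ ⊥ → aOne V ≠ ⊥ →
        (∀ x > (0 : ℝ),
          V (x + sInf {z : ℝ | V z < 1}) ≤ U (x + sInf {z : ℝ | U z < 1})) ∧
        (∀ x < (0 : ℝ),
          U (x + sInf {z : ℝ | U z < 1}) ≤ V (x + sInf {z : ℝ | V z < 1}))) :=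
  moreStretched_iff_quantile_general U V hU hV hUcont
end

section
/- Let D be the set of non-increasing right-continuous functions U : ℝ → [0,1] with lim_{x→−∞} U(x) = 1 and lim_{x→+∞} U(x) = 0, and for U ∈ D set a¹(U) := inf{x ∈ ℝ : U(x) < 1} ∈ ℝ ∪ {−∞}. Suppose U, V ∈ D satisfy U ≥_s V (U is more stretched than V) and −∞ < a¹(V) < a¹(U). Then U(x) ≥ V(x) for every x ∈ ℝ. -/
/-! Choose `b` strictly between `a¹(V)` and `a¹(U)`. Then `U(b) = 1 > V(b)`, so the stretching
relation with shift `c = 0` gives `U ≥ V` on `[b, ∞)`, while on `(-∞, b)` we have `U ≡ 1 ≥ V`. -/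

open Filter Topology

lemma eq_one_of_coe_lt_aOne {U : ℝ → ℝ} (hU : ∀ x, U x ≤ 1) {x : ℝ} (hx : (x : EReal) < aOne U) :
    U x = 1 := by
  by_contra hne
  exact (sInf_le ⟨x, lt_of_le_of_ne (hU x) hne, rfl⟩ : aOne U ≤ x).not_gt hx

lemma lt_one_of_aOne_lt_coe {V : ℝ → ℝ} (hV : Antitone V) {x : ℝ} (hx : aOne V < x) :
    V x < 1 := by
  obtain ⟨_, ⟨y, hy, rfl⟩, hyx⟩ := sInf_lt_iff.mp hx
  exact (hV (EReal.coe_le_coe_iff.mp hyx.le)).trans_lt hy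

lemma MoreStretched.le_of_lt_of_le {U V : ℝ → ℝ} (h : MoreStretched U V) {b x : ℝ}
    (hb : V b < U b) (hbx : b ≤ x) : V x ≤ U x := by
  simpa using h 0 b x hbx (by simpa using hb)

theorem moreStretched_dominates_general
    (U V : ℝ → ℝ) (hU : IsCCDF U) (hV : IsCCDF V)
    (hstretch : MoreStretched U V)
    (hlt : aOne V < aOne U) :
    ∀ x : ℝ, V x ≤ U x := by
  intro x
  obtain ⟨b, hVb, hbU⟩ := EReal.exists_between_coe_real hlt
  have hU1 : ∀ y, U y ≤ 1 := fun y => (hU.1 y).2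
  rcases le_or_gt b x with hbx | hxb
  · refine hstretch.le_of_lt_of_le ?_ hbx
    rw [eq_one_of_coe_lt_aOne hU1 hbU]
    exact lt_one_of_aOne_lt_coe hV.2.1 hVb
  · rw [eq_one_of_coe_lt_aOne hU1 ((EReal.coe_lt_coe_iff.mpr hxb).trans hbU)]
    exact (hV.1 x).2

/-- If `U, V ∈ D`, `U` is more stretched than `V`, and `−∞ < a¹(V) < a¹(U)`, then
`U(x) ≥ V(x)` for every `x ∈ ℝ`: a more stretched profile whose front lies strictly
to the right dominates pointwise. -/
theorem moreStretched_dominates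
    (U V : ℝ → ℝ) (hU : IsCCDF U) (hV : IsCCDF V)
    (hstretch : MoreStretched U V)
    (hVbot : (⊥ : EReal) < aOne V) (hlt : aOne V < aOne U) :
    ∀ x : ℝ, V x ≤ U x :=
  moreStretched_dominates_general U V hU hV hstretch hlt
end

section
/- Define d₁(x,y) := min(|x−y|, 1). Let N ≥ 2 and let x₁,…,x_N and y₁,…,y_N be real numbers. Let i* ∈ {1,…,N} be an index with x_{i*} = min_i x_i and j* ∈ {1,…,N} an index with y_{j*} = min_j y_j. Then min over bijections ι : {1,…,N}∖{i*} → {1,…,N}∖{j*} of Σ_{i ≠ i*} d₁(x_i, y_{ι(i)}) is at most min over bijections σ : {1,…,N} → {1,…,N} of Σ_{i=1}^N d₁(x_i, y_{σ(i)}). -/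
/-!
Take an optimal bijection `σ` and compose it with the transposition of `i*` and `σ⁻¹ j*`, so that
the new bijection `τ` matches `i*` with `j*`; restricting `τ` gives a bijection of the complements.
With `i' = σ⁻¹ j*`, the exchange replaces the pairs `(i*, σ i*)` and `(i', j*)` by `(i*, j*)` and
`(i', σ i*)`, and `d₁(x_{i'}, y_{σ i*}) ≤ d₁(x_{i'}, y_{j*}) + d₁(x_{i*}, y_{σ i*})` because
`x_{i*}` and `y_{j*}` are minimal.
-/

noncomputable def d1 (x y : ℝ) : ℝ := min |x - y| 1

lemma d1_nonneg (x y : ℝ) : 0 ≤ d1 x y := le_min (abs_nonneg _) zero_le_one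

lemma d1_comm (x y : ℝ) : d1 x y = d1 y x := by
  rw [d1, d1, abs_sub_comm]

lemma d1_le_d1_of_le_of_le {x y y' : ℝ} (hy : y ≤ y') (hy' : y' ≤ x) : d1 x y' ≤ d1 x y :=
  min_le_min_right 1 <| by rw [abs_of_nonneg (by linarith), abs_of_nonneg (by linarith)]; linarith

lemma d1_le_add_of_le {a a' b b' : ℝ} (ha : a ≤ a') (hb : b ≤ b') :
    d1 a' b' ≤ d1 a' b + d1 a b' := by
  rcases le_total b' a' with h | h
  · linarith [d1_le_d1_of_le_of_le hb h, d1_nonneg a b']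
  · have h' := d1_le_d1_of_le_of_le ha h
    rw [d1_comm b', d1_comm b'] at h'
    linarith [d1_nonneg a' b]

section Matching

variable {α β : Type*} [Fintype α] [DecidableEq α]

theorem sum_swap_trans_sub_sum (c : α → β → ℝ) (σ : α ≃ β) {p q : α} (hpq : p ≠ q) :
    ∑ a, c a ((Equiv.swap p q).trans σ a) - ∑ a, c a (σ a)
      = c p (σ q) + c q (σ p) - c p (σ p) - c q (σ q) := by
  rw [← Finset.sum_sub_distrib, Fintype.sum_eq_add p q hpq]
  · simp only [Equiv.trans_apply, Equiv.swap_apply_left, Equiv.swap_apply_right]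
    ring
  · rintro a ⟨hap, haq⟩
    rw [Equiv.trans_apply, Equiv.swap_apply_of_ne_of_ne hap haq, sub_self]

theorem exists_equiv_subtype_ne_sum_le (c : α → β → ℝ) {a₀ : α} {b₀ : β}
    (hc : ∀ a b, c a b ≤ c a b₀ + c a₀ b) (σ : α ≃ β) :
    ∃ ι : {a // a ≠ a₀} ≃ {b // b ≠ b₀}, ∑ a, c a.1 (ι a).1 ≤ ∑ a, c a (σ a) := by
  set q := σ.symm b₀
  set τ := (Equiv.swap a₀ q).trans σ
  have hτ : τ a₀ = b₀ := by simp [τ, q]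
  refine ⟨τ.subtypeEquiv fun a => hτ ▸ τ.injective.ne_iff.symm, ?_⟩
  have hsplit := Fintype.sum_eq_add_sum_subtype_ne (fun a => c a (τ a)) a₀
  simp only [Equiv.subtypeEquiv_apply, hτ] at hsplit ⊢
  by_cases hq : a₀ = q
  · have hτσ : τ = σ := by simp [τ, ← hq]
    rw [hτσ] at hsplit ⊢
    linarith [hc a₀ b₀]
  · have hswap := sum_swap_trans_sub_sum c σ hq
    rw [show σ q = b₀ from σ.apply_symm_apply b₀] at hswap
    linarith [hc q (σ a₀)]

end Matching

theorem monge_cost_remove_min_le_general (N : ℕ)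
    (x y : Fin N → ℝ) (istar jstar : Fin N)
    (hx : ∀ i, x istar ≤ x i) (hy : ∀ j, y jstar ≤ y j) :
    sInf {c : ℝ | ∃ ι : {i : Fin N // i ≠ istar} ≃ {j : Fin N // j ≠ jstar},
        c = ∑ i : {i : Fin N // i ≠ istar}, d1 (x i.1) (y (ι i).1)}
      ≤ sInf {c : ℝ | ∃ σ : Equiv.Perm (Fin N),
        c = ∑ i, d1 (x i) (y (σ i))} := by
  have hbdd : BddBelow {c : ℝ | ∃ ι : {i : Fin N // i ≠ istar} ≃ {j : Fin N // j ≠ jstar},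
      c = ∑ i : {i : Fin N // i ≠ istar}, d1 (x i.1) (y (ι i).1)} :=
    ⟨0, by rintro _ ⟨ι, rfl⟩; exact Finset.sum_nonneg fun i _ => d1_nonneg _ _⟩
  refine le_csInf ⟨_, Equiv.refl _, rfl⟩ ?_
  rintro _ ⟨σ, rfl⟩
  obtain ⟨ι, hι⟩ := exists_equiv_subtype_ne_sum_le (fun i j => d1 (x i) (y j))
    (fun i j => d1_le_add_of_le (hx i) (hy j)) σ
  exact (csInf_le hbdd ⟨ι, rfl⟩).trans hι

/-- Removing the minimal point from each of two `N`-point configurations does not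
increase the optimal (Monge) matching cost for the truncated cost `d₁`: the minimum
over bijections `ι : {1,…,N}∖{i*} → {1,…,N}∖{j*}` of `Σ_{i ≠ i*} d₁(x_i, y_{ι(i)})`
is at most the minimum over bijections `σ` of `{1,…,N}` of `Σ_i d₁(x_i, y_{σ(i)})`,
where `x_{i*} = min_i x_i` and `y_{j*} = min_j y_j`. -/
theorem monge_cost_remove_min_le (N : ℕ) (hN : 2 ≤ N)
    (x y : Fin N → ℝ) (istar jstar : Fin N)
    (hx : ∀ i, x istar ≤ x i) (hy : ∀ j, y jstar ≤ y j) :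
    sInf {c : ℝ | ∃ ι : {i : Fin N // i ≠ istar} ≃ {j : Fin N // j ≠ jstar},
        c = ∑ i : {i : Fin N // i ≠ istar}, d1 (x i.1) (y (ι i).1)}
      ≤ sInf {c : ℝ | ∃ σ : Equiv.Perm (Fin N),
        c = ∑ i, d1 (x i) (y (σ i))} :=
  monge_cost_remove_min_le_general N x y istar jstar hx hy
end

section
/- Let g : [0,∞) → ℝ be continuous and suppose that for every h > 0 the function t ↦ g(t+h) − g(t) is non-decreasing on [0,∞). Then for every T > 0 and all s, t with T ≤ t ≤ s, one has g(s) − g(t) ≥ ((g(T) − g(0))/T) · (s − t). -/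
/-- Key discrete inequality: if `T = q·h` and we step `p` times of width `h = T/q`
from `t ≥ T`, then `p·(g T − g 0) ≤ q·(g (t + p·h) − g t)`. -/
lemma increment_key
    (g : ℝ → ℝ)
    (hmono : ∀ h > (0 : ℝ), MonotoneOn (fun t => g (t + h) - g t) (Set.Ici (0 : ℝ)))
    (T : ℝ) (hT : 0 < T) (p q : ℕ) (hq : 0 < q) (t : ℝ) (ht : T ≤ t) :
    (p : ℝ) * (g T - g 0) ≤ (q : ℝ) * (g (t + p * (T / q)) - g t) := by
  set h : ℝ := T / q with hh
  have hqR : (0 : ℝ) < q := by exact_mod_cast hq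
  have hpos : 0 < h := div_pos hT hqR
  have hqh : (q : ℝ) * h = T := by rw [hh]; field_simp
  -- telescoping sums
  have hsumB : ∑ j ∈ Finset.range q, (g ((j + 1 : ℕ) * h) - g (j * h)) = g T - g 0 := by
    rw [Finset.sum_range_sub (fun j => g (j * h))]
    norm_num [hqh]
  have hsumA : ∑ i ∈ Finset.range p, (g (t + (i + 1 : ℕ) * h) - g (t + i * h))
      = g (t + p * h) - g t := by
    rw [Finset.sum_range_sub (fun i => g (t + i * h))]
    norm_num
  -- termwise comparison
  have hBA : ∀ i ∈ Finset.range p, ∀ j ∈ Finset.range q,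
      g ((j + 1 : ℕ) * h) - g (j * h) ≤ g (t + (i + 1 : ℕ) * h) - g (t + i * h) := by
    intro i _ j hj
    have hjq : (j : ℝ) ≤ (q : ℝ) - 1 := by
      have : j + 1 ≤ q := Finset.mem_range.1 hj
      have : ((j : ℝ) + 1) ≤ (q : ℝ) := by exact_mod_cast this
      linarith
    have hmemj : (j : ℝ) * h ∈ Set.Ici (0 : ℝ) := by
      have : (0 : ℝ) ≤ (j : ℝ) * h := mul_nonneg (Nat.cast_nonneg j) hpos.le
      simpa using this
    have hle : (j : ℝ) * h ≤ t + i * h := by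
      have h1 : (j : ℝ) * h ≤ ((q : ℝ) - 1) * h :=
        mul_le_mul_of_nonneg_right hjq hpos.le
      have h2 : ((q : ℝ) - 1) * h = T - h := by rw [sub_mul, one_mul, hqh]
      have h3 : (0 : ℝ) ≤ (i : ℝ) * h := mul_nonneg (Nat.cast_nonneg i) hpos.le
      linarith
    have hmemi : t + (i : ℝ) * h ∈ Set.Ici (0 : ℝ) := by
      have : (0 : ℝ) ≤ (i : ℝ) * h := mul_nonneg (Nat.cast_nonneg i) hpos.le
      have : (0 : ℝ) ≤ t + (i : ℝ) * h := by linarith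
      simpa using this
    have := hmono h hpos hmemj hmemi hle
    simp only at this
    have e1 : ((j : ℕ) + 1 : ℕ) * h = (j : ℝ) * h + h := by push_cast; ring
    have e2 : t + ((i : ℕ) + 1 : ℕ) * h = (t + (i : ℝ) * h) + h := by push_cast; ring
    rw [e1, e2]
    exact this
  -- for each i < p : g T - g 0 ≤ q * A i
  have hstep : ∀ i ∈ Finset.range p,
      g T - g 0 ≤ (q : ℝ) * (g (t + (i + 1 : ℕ) * h) - g (t + i * h)) := by
    intro i hi
    calc g T - g 0 = ∑ j ∈ Finset.range q, (g ((j + 1 : ℕ) * h) - g (j * h)) := hsumB.symm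
      _ ≤ ∑ _j ∈ Finset.range q, (g (t + (i + 1 : ℕ) * h) - g (t + i * h)) :=
          Finset.sum_le_sum (fun j hj => hBA i hi j hj)
      _ = (q : ℝ) * (g (t + (i + 1 : ℕ) * h) - g (t + i * h)) := by
          rw [Finset.sum_const, Finset.card_range, nsmul_eq_mul]
  calc (p : ℝ) * (g T - g 0)
      = ∑ _i ∈ Finset.range p, (g T - g 0) := by
        rw [Finset.sum_const, Finset.card_range, nsmul_eq_mul]
    _ ≤ ∑ i ∈ Finset.range p, (q : ℝ) * (g (t + (i + 1 : ℕ) * h) - g (t + i * h)) :=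
        Finset.sum_le_sum hstep
    _ = (q : ℝ) * (g (t + p * h) - g t) := by rw [← Finset.mul_sum, hsumA]

/-- If `g : [0,∞) → ℝ` is continuous and for every `h > 0` the increment function
`t ↦ g(t+h) − g(t)` is non-decreasing on `[0,∞)`, then for every `T > 0` and all
`T ≤ t ≤ s` one has `g(s) − g(t) ≥ ((g(T) − g(0))/T) (s − t)`. -/
theorem increment_linear_lower_bound
    (g : ℝ → ℝ) (hg : ContinuousOn g (Set.Ici (0 : ℝ)))
    (hmono : ∀ h > (0 : ℝ), MonotoneOn (fun t => g (t + h) - g t) (Set.Ici (0 : ℝ)))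
    (T : ℝ) (hT : 0 < T) :
    ∀ s t : ℝ, T ≤ t → t ≤ s →
      ((g T - g 0) / T) * (s - t) ≤ g s - g t := by
  intro s t ht hts
  set c : ℝ := (g T - g 0) / T with hc
  set r : ℝ := (s - t) / T with hr
  have hr0 : 0 ≤ r := div_nonneg (by linarith) hT.le
  -- approximating sequence
  set u : ℕ → ℝ := fun n => t + (⌊(n + 1 : ℝ) * r⌋₊ : ℝ) * (T / (n + 1)) with hu
  -- the inequality along the sequence
  have hineq : ∀ n : ℕ, c * (u n - t) ≤ g (u n) - g t := by
    intro n
    have hq : 0 < n + 1 := Nat.succ_pos n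
    have key := increment_key g hmono T hT (⌊(n + 1 : ℝ) * r⌋₊) (n + 1) hq t ht
    have hn1 : ((n + 1 : ℕ) : ℝ) = (n : ℝ) + 1 := by push_cast; ring
    rw [hn1] at key
    have hnpos : (0 : ℝ) < (n : ℝ) + 1 := by positivity
    have hut : u n - t = (⌊(n + 1 : ℝ) * r⌋₊ : ℝ) * (T / (n + 1)) := by simp [hu]
    rw [hut]
    rw [hc]
    have hTne : T ≠ 0 := ne_of_gt hT
    have hne : ((n : ℝ) + 1) ≠ 0 := ne_of_gt hnpos
    have : (g T - g 0) / T * ((⌊(n + 1 : ℝ) * r⌋₊ : ℝ) * (T / (n + 1)))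
        = (⌊(n + 1 : ℝ) * r⌋₊ : ℝ) * (g T - g 0) / ((n : ℝ) + 1) := by
      field_simp
    rw [this]
    rw [div_le_iff₀ hnpos]
    have : (g (u n) - g t) * ((n : ℝ) + 1) = ((n : ℝ) + 1) * (g (t + (⌊(n + 1 : ℝ) * r⌋₊ : ℝ) * (T / ((n : ℝ) + 1))) - g t) := by
      rw [hu]; ring_nf
    rw [this]
    exact key
  -- u n → s
  have hun_mem : ∀ n, u n ∈ Set.Ici (0 : ℝ) := by
    intro n
    have h1 : (0 : ℝ) ≤ (⌊(n + 1 : ℝ) * r⌋₊ : ℝ) * (T / (n + 1)) := by positivity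
    have : (0 : ℝ) ≤ t := le_trans hT.le ht
    simp only [hu, Set.mem_Ici]
    linarith
  have hlim : Filter.Tendsto u Filter.atTop (nhds s) := by
    have hub : ∀ n : ℕ, u n ≤ s := by
      intro n
      have hfl : (⌊(n + 1 : ℝ) * r⌋₊ : ℝ) ≤ (n + 1 : ℝ) * r :=
        Nat.floor_le (by positivity)
      have hnpos : (0 : ℝ) < (n : ℝ) + 1 := by positivity
      have : (⌊(n + 1 : ℝ) * r⌋₊ : ℝ) * (T / (n + 1)) ≤ ((n + 1 : ℝ) * r) * (T / (n + 1)) :=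
        mul_le_mul_of_nonneg_right hfl (by positivity)
      have h2 : ((n + 1 : ℝ) * r) * (T / (n + 1)) = r * T := by field_simp
      have h3 : r * T = s - t := by rw [hr]; field_simp
      simp only [hu]
      nlinarith
    have hlb : ∀ n : ℕ, s - T / (n + 1) ≤ u n := by
      intro n
      have hnpos : (0 : ℝ) < (n : ℝ) + 1 := by positivity
      have hfl : (n + 1 : ℝ) * r - 1 < (⌊(n + 1 : ℝ) * r⌋₊ : ℝ) := by
        have := Nat.lt_floor_add_one ((n + 1 : ℝ) * r)
        linarith [Nat.sub_one_lt_floor ((n + 1 : ℝ) * r)]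
      have hpos : 0 < T / ((n : ℝ) + 1) := by positivity
      have h1 : ((n + 1 : ℝ) * r - 1) * (T / (n + 1)) ≤ (⌊(n + 1 : ℝ) * r⌋₊ : ℝ) * (T / (n + 1)) :=
        mul_le_mul_of_nonneg_right hfl.le hpos.le
      have h2 : ((n + 1 : ℝ) * r - 1) * (T / (n + 1)) = r * T - T / (n + 1) := by field_simp
      have h3 : r * T = s - t := by rw [hr]; field_simp
      simp only [hu]
      nlinarith
    have htend : Filter.Tendsto (fun n : ℕ => s - T / (n + 1)) Filter.atTop (nhds s) := by
      have : Filter.Tendsto (fun n : ℕ => T / ((n : ℝ) + 1)) Filter.atTop (nhds 0) :=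
        tendsto_const_nhds.div_atTop (Filter.tendsto_atTop_add_const_right _ 1 tendsto_natCast_atTop_atTop)
      simpa using tendsto_const_nhds.sub this
    exact tendsto_of_tendsto_of_tendsto_of_le_of_le htend tendsto_const_nhds hlb hub
  have hs0 : s ∈ Set.Ici (0 : ℝ) := by
    simp only [Set.mem_Ici]; linarith
  have hglim : Filter.Tendsto (fun n => g (u n)) Filter.atTop (nhds (g s)) := by
    have : Filter.Tendsto u Filter.atTop (nhdsWithin s (Set.Ici 0)) := by
      rw [tendsto_nhdsWithin_iff]
      exact ⟨hlim, Filter.Eventually.of_forall hun_mem⟩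
    exact ((hg s hs0).tendsto).comp this
  have hL : Filter.Tendsto (fun n => c * (u n - t)) Filter.atTop (nhds (c * (s - t))) :=
    (tendsto_const_nhds.mul (hlim.sub tendsto_const_nhds))
  have hR : Filter.Tendsto (fun n => g (u n) - g t) Filter.atTop (nhds (g s - g t)) :=
    hglim.sub tendsto_const_nhds
  exact le_of_tendsto_of_tendsto' hL hR hineq
end
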